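/- arXiv:0905.4065 — 9 statements merged into one kernel-verified Lean document; each statement's English description precedes it below -/
import Mathlib

section
/- Let 𝔄 be a C*-algebra, 𝔛 a complex linear space, and ⟨·,·⟩ : 𝔛 × 𝔛 → 𝔄 an 𝔄-valued positive sesquilinear form. Suppose x, y ∈ 𝔛 and ω, Ω ∈ ℂ satisfy: (i) ⟨x,y⟩* = ⟨y,x⟩; (ii) ⟨y,y⟩^{1/2}⟨x,y⟩ = ⟨x,y⟩⟨y,y⟩^{1/2}; (iii) Re ⟨Ωy − x, x − ωy⟩ ≥ 0. Then |⟨x,x⟩^{1/2}⟨y,y⟩^{1/2}|² − |⟨y,x⟩|² ≤ (1/4)|Ω − ω|² ⟨y,y⟩². -/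
open scoped ComplexOrder

/-!
With `a = ⟨x,x⟩`, `b = ⟨y,y⟩`, `c = ⟨x,y⟩`, `s = b^{1/2}` and `m = (Ω + ω)/2`, and using
`⟨x,y⟩* = ⟨y,x⟩` and `s c = c s`, one has the identity
`¼|Ω - ω|² b² - (s a s - c c*) = (c - m b)(c - m b)* + s (Re ⟨Ωy - x, x - ωy⟩) s`,
obtained by completing the square around the midpoint `m`. Both summands on the right are
positive, the second one by condition (iii).
-/

theorem LinearMap.apply_smul_sub_sub_smul {A X : Type*} [AddCommGroup A] [Module ℂ A]
    [AddCommGroup X] [Module ℂ X] (f : X →ₗ[ℂ] X →ₗ⋆[ℂ] A) (x y : X) (ω Ω : ℂ) :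
    f (Ω • y - x) (x - ω • y)
      = Ω • f y x + starRingEnd ℂ ω • f x y - (Ω * starRingEnd ℂ ω) • f y y - f x x := by
  simp only [map_sub, map_smul, map_smulₛₗ, LinearMap.sub_apply, LinearMap.smul_apply]
  rw [smul_sub, smul_smul, mul_comm]
  abel

section StarAlgebra

variable {A : Type*} [Ring A] [StarRing A] [Algebra ℂ A] [StarModule ℂ A]

theorem quarter_norm_sub_sq_smul_sq_sub_eq {s a b c d : A} (hs : IsSelfAdjoint s)
    (ha : IsSelfAdjoint a) (hsb : s * s = b) (hsc : Commute s c) {ω Ω : ℂ}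
    (hd : d = Ω • star c + starRingEnd ℂ ω • c - (Ω * starRingEnd ℂ ω) • b - a) :
    ((4 : ℝ)⁻¹ * ‖Ω - ω‖ ^ 2) • b ^ 2 - (s * a * s - c * star c)
      = (c - ((Ω + ω) / 2) • b) * star (c - ((Ω + ω) / 2) • b)
        + s * ((2 : ℝ)⁻¹ • (d + star d)) * s := by
  have hb : star b = b := by rw [← hsb, star_mul, hs.star_eq]
  have hsc' : Commute s (star c) := by simpa only [hs.star_eq] using hsc.star_star
  have hbc : Commute b (star c) := hsb ▸ hsc'.mul_left hsc'
  have hs_c_s : s * c * s = c * b := by rw [hsc.eq, mul_assoc, hsb]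
  have hs_starc_s : s * star c * s = star c * b := by rw [hsc'.eq, mul_assoc, hsb]
  have hs_b_s : s * b * s = b ^ 2 := by rw [← hsb, sq]; noncomm_ring
  have hd_add_star : d + star d = (starRingEnd ℂ Ω + starRingEnd ℂ ω) • c + (Ω + ω) • star c
      - (Ω * starRingEnd ℂ ω + starRingEnd ℂ Ω * ω) • b - (2 : ℂ) • a := by
    simp only [hd, star_sub, star_add, star_smul, star_star, ha.star_eq, hb, RCLike.star_def,
      map_mul, Complex.conj_conj]
    module
  have hnorm : ((4 : ℝ)⁻¹ * ‖Ω - ω‖ ^ 2 : ℝ)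
      = ((4 : ℂ)⁻¹ * ((Ω - ω) * (starRingEnd ℂ Ω - starRingEnd ℂ ω)) : ℂ) := by
    rw [← map_sub, Complex.mul_conj, Complex.normSq_eq_norm_sq]
    push_cast
    ring
  rw [← Complex.coe_smul, ← Complex.coe_smul, hnorm, hd_add_star]
  simp only [star_sub, star_smul, hb, RCLike.star_def, mul_sub, sub_mul, mul_add, add_mul,
    mul_smul_comm, smul_mul_assoc, hs_c_s, hs_starc_s, hs_b_s, hbc.eq, sq, map_div₀, map_add, map_ofNat]
  push_cast
  module

theorem conj_sub_mul_star_le_quarter_norm_sub_sq_smul_sq [PartialOrder A] [StarOrderedRing A]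
    {s a b c d : A} (hs : IsSelfAdjoint s) (ha : IsSelfAdjoint a) (hsb : s * s = b)
    (hsc : Commute s c) {ω Ω : ℂ}
    (hd : d = Ω • star c + starRingEnd ℂ ω • c - (Ω * starRingEnd ℂ ω) • b - a)
    (hd_re : 0 ≤ (2 : ℝ)⁻¹ • (d + star d)) :
    s * a * s - c * star c ≤ ((4 : ℝ)⁻¹ * ‖Ω - ω‖ ^ 2) • b ^ 2 := by
  rw [← sub_nonneg, quarter_norm_sub_sq_smul_sq_sub_eq hs ha hsb hsc hd]
  refine add_nonneg (mul_star_self_nonneg _) ?_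
  simpa only [hs.star_eq] using star_left_conjugate_nonneg hd_re s

end StarAlgebra

/-- **Additive reverse Cauchy–Schwarz inequality** for a positive `A`-valued sesquilinear
form `B` on a complex linear space `X`, where `A` is a C*-algebra. -/
theorem additive_reverse_cauchy_schwarz
    {A : Type*} [CStarAlgebra A] [PartialOrder A] [StarOrderedRing A]
    {X : Type*} [AddCommGroup X] [Module ℂ X]
    (B : X → X → A)
    (h_add_left : ∀ x x' y : X, B (x + x') y = B x y + B x' y)
    (h_smul_left : ∀ (c : ℂ) (x y : X), B (c • x) y = c • B x y)
    (h_add_right : ∀ x y y' : X, B x (y + y') = B x y + B x y')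
    (h_smul_right : ∀ (c : ℂ) (x y : X), B x (c • y) = (starRingEnd ℂ c) • B x y)
    (h_pos : ∀ x : X, 0 ≤ B x x)
    (x y : X) (ω Ω : ℂ)
    (h1 : star (B x y) = B y x)
    (h2 : CFC.sqrt (B y y) * B x y = B x y * CFC.sqrt (B y y))
    (h3 : 0 ≤ (2 : ℝ)⁻¹ • (B (Ω • y - x) (x - ω • y) + star (B (Ω • y - x) (x - ω • y)))) :
    star (CFC.sqrt (B x x) * CFC.sqrt (B y y)) * (CFC.sqrt (B x x) * CFC.sqrt (B y y))
        - star (B y x) * B y x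
      ≤ ((4 : ℝ)⁻¹ * ‖Ω - ω‖ ^ 2) • (B y y) ^ 2 := by
  let f : X →ₗ[ℂ] X →ₗ⋆[ℂ] A :=
    LinearMap.mk₂'ₛₗ _ _ B h_add_left h_smul_left h_add_right h_smul_right
  have hs : IsSelfAdjoint (CFC.sqrt (B y y)) := .of_nonneg (CFC.sqrt_nonneg _)
  have hr : IsSelfAdjoint (CFC.sqrt (B x x)) := .of_nonneg (CFC.sqrt_nonneg _)
  have hsas : star (CFC.sqrt (B x x) * CFC.sqrt (B y y)) * (CFC.sqrt (B x x) * CFC.sqrt (B y y))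
      = CFC.sqrt (B y y) * B x x * CFC.sqrt (B y y) := by
    rw [star_mul, hs.star_eq, hr.star_eq, mul_assoc, ← mul_assoc (CFC.sqrt (B x x)),
      CFC.sqrt_mul_sqrt_self _ (h_pos x), ← mul_assoc]
  have hd : B (Ω • y - x) (x - ω • y) = Ω • star (B x y) + starRingEnd ℂ ω • B x y
      - (Ω * starRingEnd ℂ ω) • B y y - B x x := h1 ▸ f.apply_smul_sub_sub_smul x y ω Ω
  rw [hsas, ← h1, star_star]
  exact conj_sub_mul_star_le_quarter_norm_sub_sq_smul_sq hs (h_pos x).isSelfAdjoint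
    (CFC.sqrt_mul_sqrt_self _ (h_pos y)) h2 hd h3
end

section
/- Let 𝔄 be a C*-algebra, 𝔛 a complex linear space, and ⟨·,·⟩ : 𝔛 × 𝔛 → 𝔄 an 𝔄-valued positive sesquilinear form. Suppose x, y ∈ 𝔛 and ω, Ω ∈ ℂ satisfy: (i) ⟨x,y⟩* = ⟨y,x⟩; (ii) ⟨x,y⟩ is a normal element of 𝔄; (iii) Re ⟨Ωy − x, x − ωy⟩ ≥ 0; and (iv) Re(ω̄Ω) > 0. Then ⟨x,x⟩^{1/2}⟨y,y⟩^{1/2} + ⟨y,y⟩^{1/2}⟨x,x⟩^{1/2} ≤ ((|Ω| + |ω|)/√(Re(ω̄Ω))) · |⟨x,y⟩|. -/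
/-!
Expanding `ℜ ⟨Ω y - x, x - ω y⟩` and bounding `ℜ c ≤ |c|` for the normal elements
`c = Ω ⟨y, x⟩` and `c = conj ω ⟨x, y⟩` gives the additive reverse inequality
`⟨x, x⟩ + Re (conj ω Ω) ⟨y, y⟩ ≤ (‖Ω‖ + ‖ω‖) |⟨x, y⟩|`. The operator AM–GM inequality
`u v + v u ≤ u² + v²` for `u = ⟨x, x⟩^½` and `v = √(Re (conj ω Ω)) ⟨y, y⟩^½` turns it into the
multiplicative one.
-/

open scoped ComplexOrder ComplexStarModule

lemma IsSelfAdjoint.mul_add_mul_le_mul_self_add_mul_self {R : Type*} [NonUnitalRing R]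
    [StarRing R] [PartialOrder R] [StarOrderedRing R] {u v : R} (hu : IsSelfAdjoint u)
    (hv : IsSelfAdjoint v) :
    u * v + v * u ≤ u * u + v * v := by
  have h := star_mul_self_nonneg (u - v)
  rw [star_sub, hu.star_eq, hv.star_eq] at h
  rw [← sub_nonneg]
  convert h using 1
  noncomm_ring

lemma realPart_apply_smul_sub_sub_smul {A : Type*} [AddCommGroup A] [Module ℂ A]
    [StarAddMonoid A] [StarModule ℂ A] {X : Type*} [AddCommGroup X] [Module ℂ X]
    (f : X →ₗ[ℂ] X →ₗ⋆[ℂ] A) {x y : X} (hx : IsSelfAdjoint (f x x))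
    (hy : IsSelfAdjoint (f y y)) (ω Ω : ℂ) :
    (ℜ (f (Ω • y - x) (x - ω • y)) : A)
      = ℜ (Ω • f y x) + ℜ (starRingEnd ℂ ω • f x y) - f x x
        - (starRingEnd ℂ ω * Ω).re • f y y := by
  have hexp : f (Ω • y - x) (x - ω • y)
      = Ω • f y x + starRingEnd ℂ ω • f x y - f x x - (starRingEnd ℂ ω * Ω) • f y y := by
    simp only [map_sub, map_smul, LinearMap.sub_apply, LinearMap.smul_apply, map_smulₛₗ]
    module
  have hre : (ℜ ((starRingEnd ℂ ω * Ω) • f y y) : A) = (starRingEnd ℂ ω * Ω).re • f y y := by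
    simp [realPart_smul, hy.coe_realPart, hy.imaginaryPart]
  rw [hexp, map_sub, map_sub, map_add]
  simp only [AddSubgroupClass.coe_sub, AddMemClass.coe_add, hx.coe_realPart, hre]

section CStarAlgebra

variable {A : Type*} [CStarAlgebra A] [PartialOrder A] [StarOrderedRing A]

lemma IsStarNormal.realPart_le_abs (b : A) [IsStarNormal b] : (ℜ b : A) ≤ CFC.abs b := by
  rw [← cfc_re_id b, CFC.abs_eq_cfcₙ_coe_norm ℂ b, cfcₙ_eq_cfc]
  exact cfc_mono fun z _ => by simpa [Complex.le_def] using Complex.re_le_norm z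

lemma smul_sqrt_mul_sqrt_add_sqrt_mul_sqrt_le {a b : A} (ha : 0 ≤ a) (hb : 0 ≤ b) (t : ℝ) :
    t • (CFC.sqrt a * CFC.sqrt b + CFC.sqrt b * CFC.sqrt a) ≤ a + t ^ 2 • b := by
  have hu : IsSelfAdjoint (CFC.sqrt a) := (CFC.sqrt_nonneg a).isSelfAdjoint
  have hv : IsSelfAdjoint (t • CFC.sqrt b) :=
    (IsSelfAdjoint.all t).smul (CFC.sqrt_nonneg b).isSelfAdjoint
  have := hu.mul_add_mul_le_mul_self_add_mul_self hv
  rwa [CFC.sqrt_mul_sqrt_self a, smul_mul_smul_comm, CFC.sqrt_mul_sqrt_self b, mul_smul_comm,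
    smul_mul_assoc, ← smul_add, ← sq] at this

lemma apply_self_add_smul_apply_self_le_of_realPart_nonneg {X : Type*} [AddCommGroup X]
    [Module ℂ X] (f : X →ₗ[ℂ] X →ₗ⋆[ℂ] A) {x y : X} (hx : 0 ≤ f x x) (hy : 0 ≤ f y y)
    (hxy : star (f x y) = f y x) [IsStarNormal (f x y)] {ω Ω : ℂ}
    (h : 0 ≤ (ℜ (f (Ω • y - x) (x - ω • y)) : A)) :
    f x x + (starRingEnd ℂ ω * Ω).re • f y y ≤ (‖Ω‖ + ‖ω‖) • CFC.abs (f x y) := by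
  rw [realPart_apply_smul_sub_sub_smul f hx.isSelfAdjoint hy.isSelfAdjoint, sub_sub,
    sub_nonneg, ← hxy] at h
  calc f x x + (starRingEnd ℂ ω * Ω).re • f y y
      ≤ ℜ (Ω • star (f x y)) + ℜ (starRingEnd ℂ ω • f x y) := h
    _ ≤ CFC.abs (Ω • star (f x y)) + CFC.abs (starRingEnd ℂ ω • f x y) :=
      add_le_add (IsStarNormal.realPart_le_abs _) (IsStarNormal.realPart_le_abs _)
    _ = (‖Ω‖ + ‖ω‖) • CFC.abs (f x y) := by
      rw [CFC.abs_smul, CFC.abs_smul, CFC.abs_star (f x y), Complex.norm_conj, add_smul]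

end CStarAlgebra

/-- **Multiplicative reverse Cauchy–Schwarz inequality** for a positive `A`-valued sesquilinear
form `B` on a complex linear space `X`, where `A` is a C*-algebra. Here
`CFC.sqrt (star (B x y) * B x y)` is the absolute value `|B x y|`. -/
theorem multiplicative_reverse_cauchy_schwarz
    {A : Type*} [CStarAlgebra A] [PartialOrder A] [StarOrderedRing A]
    {X : Type*} [AddCommGroup X] [Module ℂ X]
    (B : X → X → A)
    (h_add_left : ∀ x x' y : X, B (x + x') y = B x y + B x' y)
    (h_smul_left : ∀ (c : ℂ) (x y : X), B (c • x) y = c • B x y)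
    (h_add_right : ∀ x y y' : X, B x (y + y') = B x y + B x y')
    (h_smul_right : ∀ (c : ℂ) (x y : X), B x (c • y) = (starRingEnd ℂ c) • B x y)
    (h_pos : ∀ x : X, 0 ≤ B x x)
    (x y : X) (ω Ω : ℂ)
    (h1 : star (B x y) = B y x)
    (h2 : star (B x y) * B x y = B x y * star (B x y))
    (h3 : 0 ≤ (2 : ℝ)⁻¹ • (B (Ω • y - x) (x - ω • y) + star (B (Ω • y - x) (x - ω • y))))
    (h4 : 0 < (starRingEnd ℂ ω * Ω).re) :
    CFC.sqrt (B x x) * CFC.sqrt (B y y) + CFC.sqrt (B y y) * CFC.sqrt (B x x)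
      ≤ ((‖Ω‖ + ‖ω‖) / Real.sqrt ((starRingEnd ℂ ω * Ω).re))
          • CFC.sqrt (star (B x y) * B x y) := by
  let f : X →ₗ[ℂ] X →ₗ⋆[ℂ] A :=
    LinearMap.mk₂'ₛₗ _ _ B h_add_left h_smul_left h_add_right h_smul_right
  have : IsStarNormal (f x y) := ⟨h2⟩
  have hadd := apply_self_add_smul_apply_self_le_of_realPart_nonneg f (h_pos x) (h_pos y) h1
    (by rwa [realPart_apply_coe])
  have hamgm := smul_sqrt_mul_sqrt_add_sqrt_mul_sqrt_le (h_pos x) (h_pos y)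
    (Real.sqrt (starRingEnd ℂ ω * Ω).re)
  rw [Real.sq_sqrt h4.le] at hamgm
  rw [div_eq_inv_mul, mul_smul, le_inv_smul_iff_of_pos (Real.sqrt_pos.mpr h4)]
  exact hamgm.trans hadd
end

section
/- Let φ be a positive linear functional on a C*-algebra 𝔄, let x, y ∈ 𝔄 and ω, Ω ∈ ℂ be such that Re φ((x − ωy)*(Ωy − x)) ≥ 0. Then φ(x*x)φ(y*y) − |φ(y*x)|² ≤ (1/4)|Ω − ω|² φ(y*y)². -/
/-!
Put `m = (Ω + ω) / 2`, `d = (Ω - ω) / 2` and `z = x - m • y`. Then `x - ω • y = d • y + z` and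
`Ω • y - x = d • y - z`, so the hypothesis says exactly `‖z‖ ≤ ‖d‖ ‖y‖`. The Gram determinant
`‖x‖² ‖y‖² - |⟪y, x⟫|²` does not change when `x` is replaced by `z`, and it is at most
`‖z‖² ‖y‖² ≤ ‖d‖² ‖y‖⁴`. This works in any semi-inner product space, and a positive functional `φ`
makes `(a, b) ↦ φ (a⋆ b)` a semi-inner product on the C⋆-algebra (the GNS construction).
-/

open scoped ComplexOrder InnerProductSpace
open RCLike

section InnerProductSpace

variable {𝕜 E : Type*} [RCLike 𝕜] [SeminormedAddCommGroup E] [InnerProductSpace 𝕜 E]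

theorem re_inner_add_sub (u v : E) : re ⟪u + v, u - v⟫_𝕜 = ‖u‖ ^ 2 - ‖v‖ ^ 2 := by
  simp only [inner_add_left, inner_sub_right, map_add, map_sub, inner_re_symm (𝕜 := 𝕜) v u,
    inner_self_eq_norm_sq]
  ring

theorem norm_sq_mul_norm_sq_sub_norm_inner_sq_sub_smul (x y : E) (m : 𝕜) :
    ‖x - m • y‖ ^ 2 * ‖y‖ ^ 2 - ‖⟪y, x - m • y⟫_𝕜‖ ^ 2 =
      ‖x‖ ^ 2 * ‖y‖ ^ 2 - ‖⟪y, x⟫_𝕜‖ ^ 2 := by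
  rw [norm_sub_sq (𝕜 := 𝕜), inner_sub_right, inner_smul_right, inner_smul_right, norm_smul,
    ← inner_conj_symm x y, inner_self_eq_norm_sq_to_K, ← ofReal_pow]
  simp only [RCLike.norm_sq_eq_def, mul_pow, map_sub, mul_re, mul_im, conj_re, conj_im,
    ofReal_re, ofReal_im]
  ring

theorem norm_sq_mul_norm_sq_sub_norm_inner_sq_le_of_re_inner_nonneg (x y : E) (ω Ω : 𝕜)
    (h : 0 ≤ re ⟪x - ω • y, Ω • y - x⟫_𝕜) :
    ‖x‖ ^ 2 * ‖y‖ ^ 2 - ‖⟪y, x⟫_𝕜‖ ^ 2 ≤ 1 / 4 * ‖Ω - ω‖ ^ 2 * (‖y‖ ^ 2) ^ 2 := by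
  set d : 𝕜 := (Ω - ω) / 2
  set z := x - ((Ω + ω) / 2) • y
  have hz : ‖z‖ ^ 2 ≤ ‖d‖ ^ 2 * ‖y‖ ^ 2 := by
    have hleft : x - ω • y = d • y + z := by simp only [d, z]; module
    have hright : Ω • y - x = d • y - z := by simp only [d, z]; module
    rw [hleft, hright, re_inner_add_sub, norm_smul] at h
    nlinarith
  calc ‖x‖ ^ 2 * ‖y‖ ^ 2 - ‖⟪y, x⟫_𝕜‖ ^ 2 = ‖z‖ ^ 2 * ‖y‖ ^ 2 - ‖⟪y, z⟫_𝕜‖ ^ 2 :=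
        (norm_sq_mul_norm_sq_sub_norm_inner_sq_sub_smul x y _).symm
    _ ≤ ‖z‖ ^ 2 * ‖y‖ ^ 2 := sub_le_self _ (by positivity)
    _ ≤ ‖d‖ ^ 2 * ‖y‖ ^ 2 * ‖y‖ ^ 2 := by gcongr
    _ = 1 / 4 * ‖Ω - ω‖ ^ 2 * (‖y‖ ^ 2) ^ 2 := by
      simp only [d, norm_div, RCLike.norm_ofNat]
      ring

end InnerProductSpace

/-- Additive reverse Cauchy–Schwarz inequality for a positive linear functional `φ` on a
C*-algebra `A`. -/
theorem additive_reverse_cauchy_schwarz_positive_functional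
    {A : Type*} [CStarAlgebra A] [PartialOrder A] [StarOrderedRing A]
    (φ : A →ₗ[ℂ] ℂ) (hφ : ∀ a : A, 0 ≤ a → 0 ≤ φ a)
    (x y : A) (ω Ω : ℂ)
    (h : 0 ≤ (φ (star (x - ω • y) * (Ω • y - x))).re) :
    φ (star x * x) * φ (star y * y) - (‖φ (star y * x)‖ : ℂ) ^ 2
      ≤ (1 / 4 : ℂ) * (‖Ω - ω‖ : ℂ) ^ 2 * φ (star y * y) ^ 2 := by
  let f := PositiveLinearMap.mk₀ φ hφ
  have hinner (a b : A) : φ (star a * b) = ⟪f.toPreGNS a, f.toPreGNS b⟫_ℂ := rfl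
  have hnorm (a : A) : φ (star a * a) = (‖f.toPreGNS a‖ : ℂ) ^ 2 := (f.preGNS_norm_sq _).symm
  rw [hinner] at h
  simp only [map_sub, map_smul] at h
  rw [hnorm, hnorm, hinner, show (1 / 4 : ℂ) = ((1 / 4 : ℝ) : ℂ) by norm_num]
  exact_mod_cast norm_sq_mul_norm_sq_sub_norm_inner_sq_le_of_re_inner_nonneg _ _ ω Ω h
end

section
/- Let φ be a positive linear functional on a C*-algebra 𝔄, let ω, Ω ∈ ℂ, and let y, z ∈ 𝔄 satisfy φ(y*y) = 1, φ(z*z) = 1, and φ(z*y) = 0. Set x := ((Ω + ω)/2)y + ((Ω − ω)/2)z. Then Re φ((x − ωy)*(Ωy − x)) = 0 (in particular Re φ((x − ωy)*(Ωy − x)) ≥ 0) and φ(x*x)φ(y*y) − |φ(y*x)|² = (1/4)|Ω − ω|² φ(y*y)². Consequently, if C ≥ 0 is a constant such that φ(x*x)φ(y*y) − |φ(y*x)|² ≤ C|Ω − ω|² φ(y*y)² holds for this pair x, y, then 1/4 ≤ C provided Ω ≠ ω. -/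
open scoped ComplexOrder

/-!
Positivity makes `φ` hermitian, so `φ (z⋆ y) = 0` forces `φ (y⋆ z) = 0`: the elements `y, z` are
orthonormal for the semi-inner product `⟨a, b⟩ = φ (a⋆ b)`. In this basis, with
`β = (Ω - ω) / 2`, we have `x - ω y = β (y + z)` and `Ω y - x = β (y - z)`, which are orthogonal,
and the Cauchy–Schwarz defect of `x, y` is `|β|²`.
-/

theorem LinearMap.apply_star_mul_swap_of_nonneg {A : Type*} [CStarAlgebra A] [PartialOrder A]
    [StarOrderedRing A] (φ : A →ₗ[ℂ] ℂ) (hφ : ∀ a : A, 0 ≤ a → 0 ≤ φ a) (a b : A) :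
    φ (star b * a) = star (φ (star a * b)) := by
  have h := map_star (PositiveLinearMap.mk₀ φ hφ) (star a * b)
  rwa [star_mul, star_star] at h

theorem LinearMap.apply_star_mul_of_orthonormal {A : Type*} [NonUnitalRing A] [StarRing A]
    [Module ℂ A] [StarModule ℂ A] [SMulCommClass ℂ A A] [IsScalarTower ℂ A A]
    (φ : A →ₗ[ℂ] ℂ) {y z : A} (hy : φ (star y * y) = 1) (hz : φ (star z * z) = 1)
    (hzy : φ (star z * y) = 0) (hyz : φ (star y * z) = 0) (a b c d : ℂ) :
    φ (star (a • y + b • z) * (c • y + d • z)) = star a * c + star b * d := by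
  simp only [star_add, star_smul, add_mul, mul_add, smul_mul_assoc, mul_smul_comm, map_add,
    map_smul, hy, hz, hzy, hyz, smul_eq_mul]
  ring

/-- Sharpness of the constant `1/4` in the additive reverse Cauchy–Schwarz inequality for
positive linear functionals on a C*-algebra. -/
theorem sharpness_additive_reverse_cauchy_schwarz
    {A : Type*} [CStarAlgebra A] [PartialOrder A] [StarOrderedRing A]
    (φ : A →ₗ[ℂ] ℂ) (hφ : ∀ a : A, 0 ≤ a → 0 ≤ φ a)
    (ω Ω : ℂ) (y z x : A)
    (hy : φ (star y * y) = 1) (hz : φ (star z * z) = 1) (hzy : φ (star z * y) = 0)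
    (hx : x = ((Ω + ω) / 2) • y + ((Ω - ω) / 2) • z) :
    (φ (star (x - ω • y) * (Ω • y - x))).re = 0 ∧
    φ (star x * x) * φ (star y * y) - (‖φ (star y * x)‖ : ℂ) ^ 2
        = (1 / 4 : ℂ) * (‖Ω - ω‖ : ℂ) ^ 2 * φ (star y * y) ^ 2 ∧
    ∀ C : ℝ, 0 ≤ C →
      φ (star x * x) * φ (star y * y) - (‖φ (star y * x)‖ : ℂ) ^ 2
          ≤ (C : ℂ) * (‖Ω - ω‖ : ℂ) ^ 2 * φ (star y * y) ^ 2 →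
      Ω ≠ ω → 1 / 4 ≤ C := by
  have hyz : φ (star y * z) = 0 := by
    rw [φ.apply_star_mul_swap_of_nonneg hφ, hzy, star_zero]
  have gram := φ.apply_star_mul_of_orthonormal hy hz hzy hyz
  set α : ℂ := (Ω + ω) / 2
  set β : ℂ := (Ω - ω) / 2
  have hxx : φ (star x * x) = ‖α‖ ^ 2 + ‖β‖ ^ 2 := by
    rw [hx, gram, Complex.star_def, Complex.conj_mul', Complex.conj_mul']
  have hyx : φ (star y * x) = α := by
    calc φ (star y * x) = φ (star ((1 : ℂ) • y + (0 : ℂ) • z) * x) := by simp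
      _ = α := by rw [hx, gram]; simp
  have defect : φ (star x * x) * φ (star y * y) - (‖φ (star y * x)‖ : ℂ) ^ 2
      = (1 / 4 : ℂ) * (‖Ω - ω‖ : ℂ) ^ 2 * φ (star y * y) ^ 2 := by
    have hβ : ‖β‖ = ‖Ω - ω‖ / 2 := by simp [β]
    rw [hxx, hyx, hy, hβ]
    push_cast
    ring
  refine ⟨?_, defect, fun C _ hle hne => ?_⟩
  · have hneg : x - ω • y = β • y + β • z := by rw [hx]; module
    have hpos : Ω • y - x = β • y + (-β) • z := by rw [hx]; module
    rw [hneg, hpos, gram]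
    simp
  · rw [defect, hy] at hle
    have hle' : (1 / 4 : ℝ) * ‖Ω - ω‖ ^ 2 ≤ C * ‖Ω - ω‖ ^ 2 := by
      rw [← Complex.real_le_real]
      push_cast
      simpa using hle
    exact le_of_mul_le_mul_right hle' (pow_pos (norm_pos_iff.mpr (sub_ne_zero.mpr hne)) 2)
end

section
/- Let φ be a positive linear functional on a C*-algebra 𝔄, let x, y ∈ 𝔄 and ω, Ω ∈ ℂ be such that Re φ((x − ωy)*(Ωy − x)) ≥ 0 and Re(ω̄Ω) > 0. Then φ(x*x)^{1/2} φ(y*y)^{1/2} ≤ (1/2) · ((|Ω| + |ω|)/√(Re(ω̄Ω))) · |φ(y*x)|. -/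
open scoped ComplexOrder InnerProductSpace

/-!
`⟪a, b⟫ := φ(a* b)` is a semi-inner product on `𝔄` (the pre-GNS space of `φ`), with seminorm
`‖a‖ = φ(a* a)^{1/2}`, so the claim is the reverse Cauchy–Schwarz inequality in a semi-inner
product space. There, expanding the hypothesis and bounding the cross terms by
`|Ω| |⟪y, x⟫| + |ω| |⟪y, x⟫|` gives `‖x‖² + Re(ω̄Ω) ‖y‖² ≤ (|Ω| + |ω|) |⟪y, x⟫|`, and the left side
is at least `2 √Re(ω̄Ω) ‖x‖ ‖y‖` by AM–GM.
-/

theorem two_mul_sqrt_mul_le_sq_add_mul_sq {r : ℝ} (hr : 0 ≤ r) (a b : ℝ) :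
    2 * √r * (a * b) ≤ a ^ 2 + r * b ^ 2 := by
  have := two_mul_le_add_sq a (√r * b)
  rw [mul_pow, Real.sq_sqrt hr] at this
  linarith

section InnerProductSpace

variable {𝕜 E : Type*} [RCLike 𝕜] [SeminormedAddCommGroup E] [InnerProductSpace 𝕜 E]

theorem inner_sub_smul_smul_sub (x y : E) (ω Ω : 𝕜) :
    ⟪x - ω • y, Ω • y - x⟫_𝕜 = Ω * ⟪x, y⟫_𝕜 + starRingEnd 𝕜 ω * ⟪y, x⟫_𝕜 - ⟪x, x⟫_𝕜
      - starRingEnd 𝕜 ω * Ω * ⟪y, y⟫_𝕜 := by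
  simp only [inner_sub_left, inner_sub_right, inner_smul_left, inner_smul_right]
  ring

theorem sq_norm_add_mul_sq_norm_le_of_re_inner_nonneg {x y : E} {ω Ω : 𝕜}
    (h : 0 ≤ RCLike.re ⟪x - ω • y, Ω • y - x⟫_𝕜) :
    ‖x‖ ^ 2 + RCLike.re (starRingEnd 𝕜 ω * Ω) * ‖y‖ ^ 2 ≤ (‖Ω‖ + ‖ω‖) * ‖⟪y, x⟫_𝕜‖ := by
  have hΩ : RCLike.re (Ω * ⟪x, y⟫_𝕜) ≤ ‖Ω‖ * ‖⟪y, x⟫_𝕜‖ :=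
    (RCLike.re_le_norm _).trans_eq (by rw [norm_mul, norm_inner_symm])
  have hω : RCLike.re (starRingEnd 𝕜 ω * ⟪y, x⟫_𝕜) ≤ ‖ω‖ * ‖⟪y, x⟫_𝕜‖ :=
    (RCLike.re_le_norm _).trans_eq (by rw [norm_mul, RCLike.norm_conj])
  rw [inner_sub_smul_smul_sub, inner_self_eq_norm_sq_to_K, inner_self_eq_norm_sq_to_K] at h
  simp only [map_sub, map_add, ← RCLike.ofReal_pow, RCLike.re_mul_ofReal, RCLike.ofReal_re] at h
  linarith

theorem norm_mul_norm_le_of_re_inner_nonneg {x y : E} {ω Ω : 𝕜}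
    (h : 0 ≤ RCLike.re ⟪x - ω • y, Ω • y - x⟫_𝕜) (hωΩ : 0 < RCLike.re (starRingEnd 𝕜 ω * Ω)) :
    ‖x‖ * ‖y‖ ≤ 1 / 2 * ((‖Ω‖ + ‖ω‖) / √(RCLike.re (starRingEnd 𝕜 ω * Ω))) * ‖⟪y, x⟫_𝕜‖ := by
  have := (two_mul_sqrt_mul_le_sq_add_mul_sq hωΩ.le ‖x‖ ‖y‖).trans
    (sq_norm_add_mul_sq_norm_le_of_re_inner_nonneg h)
  have hr : 0 < 2 * √(RCLike.re (starRingEnd 𝕜 ω * Ω)) := by positivity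
  rw [show ∀ c s m : ℝ, 1 / 2 * (c / s) * m = c * m / (2 * s) by intros; ring, le_div_iff₀ hr]
  linarith

end InnerProductSpace

/-- Multiplicative reverse Cauchy–Schwarz inequality for a positive linear functional `φ` on a
C*-algebra `A`. -/
theorem multiplicative_reverse_cauchy_schwarz_positive_functional
    {A : Type*} [CStarAlgebra A] [PartialOrder A] [StarOrderedRing A]
    (φ : A →ₗ[ℂ] ℂ) (hφ : ∀ a : A, 0 ≤ a → 0 ≤ φ a)
    (x y : A) (ω Ω : ℂ)
    (h : 0 ≤ (φ (star (x - ω • y) * (Ω • y - x))).re)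
    (hωΩ : 0 < (starRingEnd ℂ ω * Ω).re) :
    Real.sqrt (φ (star x * x)).re * Real.sqrt (φ (star y * y)).re
      ≤ 1 / 2 * ((‖Ω‖ + ‖ω‖) / Real.sqrt ((starRingEnd ℂ ω * Ω).re))
          * ‖φ (star y * x)‖ := by
  let f := PositiveLinearMap.mk₀ φ hφ
  have := norm_mul_norm_le_of_re_inner_nonneg (x := f.toPreGNS x) (y := f.toPreGNS y)
    (ω := ω) (Ω := Ω)
  simp only [← map_smul, ← map_sub, f.preGNS_inner_def, f.ofPreGNS_toPreGNS] at this
  exact this h hωΩ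
end

section
/- Let ℋ be a complex Hilbert space and T, S ∈ 𝔅(ℋ) strictly positive bounded operators with TS = ST. Then for all x ∈ ℋ: ‖Tx‖²‖Sx‖² − |⟨Tx, Sx⟩|² ≤ ((sup σ(T) sup σ(S) − inf σ(T) inf σ(S))/2)² · min{ ‖Sx‖⁴/(sup σ(S)² inf σ(S)²), ‖Tx‖⁴/(sup σ(T)² inf σ(T)²) }. -/
/-!
If `m_T ≤ T ≤ M_T` and `m_S ≤ S ≤ M_S`, then `M_S T - m_T S` and `M_T S - m_S T` are positive
and commute, so their product is positive. Evaluated at `x`, this gives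
`m_S M_S ‖Tx‖² + m_T M_T ‖Sx‖² ≤ (M_T M_S + m_T m_S) Re ⟪Tx, Sx⟫`,
and squaring it bounds `‖Tx‖²‖Sx‖² - (Re ⟪Tx, Sx⟫)²` by a multiple of `‖Sx‖⁴`, after completing
the square. Exchanging `T` and `S` gives the other term of the minimum; the spectral bounds
`inf σ ≤ T ≤ sup σ` come from the continuous functional calculus.
-/

open scoped InnerProductSpace

theorem mul_sub_sq_le_of_add_le_mul {α β γ a b c : ℝ} (hα : 0 < α) (hγ : 0 < γ)
    (h₀ : 0 ≤ α * a + β * b) (h : α * a + β * b ≤ γ * c) :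
    a * b - c ^ 2 ≤ (γ ^ 2 - 4 * α * β) / (4 * α ^ 2) * b ^ 2 := by
  have hc : (α * a + β * b) ^ 2 ≤ (γ * c) ^ 2 := pow_le_pow_left₀ h₀ h 2
  rw [div_mul_eq_mul_div, le_div_iff₀ (by positivity)]
  nlinarith [sq_nonneg (2 * α ^ 2 * a + (2 * α * β - γ ^ 2) * b), mul_pos hα hα, mul_pos hγ hγ]

theorem smul_sub_smul_nonneg_of_algebraMap_le {A : Type*} [Ring A] [PartialOrder A] [StarRing A]
    [StarOrderedRing A] [Algebra ℝ A] [StarModule ℝ A] {a b : A} {m M : ℝ}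
    (hm : 0 ≤ m) (hM : 0 ≤ M) (ha : algebraMap ℝ A m ≤ a) (hb : b ≤ algebraMap ℝ A M) :
    0 ≤ M • a - m • b := by
  refine sub_nonneg.2 ?_
  calc m • b ≤ m • algebraMap ℝ A M := smul_le_smul_of_nonneg_left hb hm
    _ = M • algebraMap ℝ A m := by simp only [Algebra.algebraMap_eq_smul_one, smul_smul, mul_comm]
    _ ≤ M • a := smul_le_smul_of_nonneg_left ha hM

section

variable {A : Type*} [CStarAlgebra A] {a : A}

theorem IsSelfAdjoint.sInf_spectrum_le_sSup_spectrum [Nontrivial A] (ha : IsSelfAdjoint a) :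
    sInf (spectrum ℝ a) ≤ sSup (spectrum ℝ a) :=
  have hc := ContinuousFunctionalCalculus.isCompact_spectrum (R := ℝ) a
  csInf_le_csSup (ContinuousFunctionalCalculus.spectrum_nonempty a ha) hc.bddBelow hc.bddAbove

variable [PartialOrder A] [StarOrderedRing A]

theorem IsSelfAdjoint.algebraMap_sInf_spectrum_le (ha : IsSelfAdjoint a) :
    algebraMap ℝ A (sInf (spectrum ℝ a)) ≤ a :=
  algebraMap_le_of_le_spectrum
    (fun _ hx ↦ csInf_le (ContinuousFunctionalCalculus.isCompact_spectrum a).bddBelow hx) ha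

theorem IsSelfAdjoint.le_algebraMap_sSup_spectrum (ha : IsSelfAdjoint a) :
    a ≤ algebraMap ℝ A (sSup (spectrum ℝ a)) :=
  le_algebraMap_of_spectrum_le
    (fun _ hx ↦ le_csSup (ContinuousFunctionalCalculus.isCompact_spectrum a).bddAbove hx) ha

theorem IsSelfAdjoint.le_sInf_spectrum_of_algebraMap_le [Nontrivial A] (ha : IsSelfAdjoint a)
    {r : ℝ} (h : algebraMap ℝ A r ≤ a) : r ≤ sInf (spectrum ℝ a) :=
  le_csInf (ContinuousFunctionalCalculus.spectrum_nonempty a ha)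
    ((algebraMap_le_iff_le_spectrum ha).1 h)

end

namespace ContinuousLinearMap

variable {H : Type*} [NormedAddCommGroup H] [InnerProductSpace ℂ H] [CompleteSpace H]

theorem algebraMap_le_of_forall_le_re_inner {T : H →L[ℂ] H} (hT : IsSelfAdjoint T) {r : ℝ}
    (h : ∀ x, r * ‖x‖ ^ 2 ≤ (⟪T x, x⟫_ℂ).re) : algebraMap ℝ (H →L[ℂ] H) r ≤ T := by
  refine ⟨(hT.sub (.algebraMap _ (.all r))).isSymmetric, fun x ↦ ?_⟩
  have := h x
  simp only [reApplyInnerSelf_apply, sub_apply, algebraMap_apply, inner_sub_left,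
    map_sub, RCLike.real_smul_eq_coe_smul (K := ℂ), inner_smul_real_left, smul_eq_mul,
    RCLike.re_ofReal_mul, inner_self_eq_norm_sq, RCLike.re_to_complex]
  linarith

theorem mul_norm_sq_add_mul_norm_sq_le_re_inner {T S : H →L[ℂ] H} (hTS : Commute T S)
    {mT MT mS MS : ℝ} (hmT : 0 ≤ mT) (hmS : 0 ≤ mS) (hMT : 0 ≤ MT) (hMS : 0 ≤ MS)
    (hT₁ : algebraMap ℝ _ mT ≤ T) (hT₂ : T ≤ algebraMap ℝ _ MT)
    (hS₁ : algebraMap ℝ _ mS ≤ S) (hS₂ : S ≤ algebraMap ℝ _ MS) (x : H) :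
    mS * MS * ‖T x‖ ^ 2 + mT * MT * ‖S x‖ ^ 2 ≤ (MT * MS + mT * mS) * (⟪T x, S x⟫_ℂ).re := by
  set B := MS • T - mT • S
  set C := MT • S - mS • T
  have hB : 0 ≤ B := smul_sub_smul_nonneg_of_algebraMap_le hmT hMS hT₁ hS₂
  have hC : 0 ≤ C := smul_sub_smul_nonneg_of_algebraMap_le hmS hMT hS₁ hT₂
  have hBC : Commute B C := by
    refine .sub_left (.sub_right ?_ ?_) (.sub_right ?_ ?_) <;>
      refine .smul_left (.smul_right ?_ _) _
    exacts [hTS, .refl T, .refl S, hTS.symm]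
  have hCB : 0 ≤ RCLike.re ⟪C x, B x⟫_ℂ := by
    have := ((nonneg_iff_isPositive _).1 (hBC.mul_nonneg hB hC)).re_inner_nonneg_left x
    rwa [mul_apply_eq_comp, ← (IsSelfAdjoint.of_nonneg hB).adjoint_eq, adjoint_inner_left] at this
  simp only [B, C, sub_apply, smul_apply, inner_sub_left, inner_sub_right,
    RCLike.real_smul_eq_coe_smul (K := ℂ), inner_smul_real_left, inner_smul_real_right,
    inner_self_eq_norm_sq_to_K, smul_eq_mul, map_sub, RCLike.re_ofReal_mul, ← RCLike.ofReal_pow,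
    RCLike.ofReal_re, inner_re_symm (S x)] at hCB
  rw [← RCLike.re_to_complex]
  linarith

theorem norm_sq_mul_norm_sq_sub_norm_inner_sq_le {T S : H →L[ℂ] H} (hTS : Commute T S)
    {mT MT mS MS : ℝ} (hmT : 0 < mT) (hmS : 0 < mS) (hmMT : mT ≤ MT) (hmMS : mS ≤ MS)
    (hT₁ : algebraMap ℝ _ mT ≤ T) (hT₂ : T ≤ algebraMap ℝ _ MT)
    (hS₁ : algebraMap ℝ _ mS ≤ S) (hS₂ : S ≤ algebraMap ℝ _ MS) (x : H) :
    ‖T x‖ ^ 2 * ‖S x‖ ^ 2 - ‖⟪T x, S x⟫_ℂ‖ ^ 2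
      ≤ ((MT * MS - mT * mS) / 2) ^ 2 * (‖S x‖ ^ 4 / (MS ^ 2 * mS ^ 2)) := by
  have hMT := hmT.trans_le hmMT
  have hMS := hmS.trans_le hmMS
  have hre : (⟪T x, S x⟫_ℂ).re ^ 2 ≤ ‖⟪T x, S x⟫_ℂ‖ ^ 2 :=
    sq_le_sq' (neg_le_of_abs_le (Complex.abs_re_le_norm _))
      (le_of_abs_le (Complex.abs_re_le_norm _))
  calc ‖T x‖ ^ 2 * ‖S x‖ ^ 2 - ‖⟪T x, S x⟫_ℂ‖ ^ 2
      ≤ ‖T x‖ ^ 2 * ‖S x‖ ^ 2 - (⟪T x, S x⟫_ℂ).re ^ 2 := by linarith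
    _ ≤ ((MT * MS + mT * mS) ^ 2 - 4 * (mS * MS) * (mT * MT)) / (4 * (mS * MS) ^ 2)
          * (‖S x‖ ^ 2) ^ 2 :=
      mul_sub_sq_le_of_add_le_mul (by positivity) (by positivity) (by positivity)
        (mul_norm_sq_add_mul_norm_sq_le_re_inner hTS hmT.le hmS.le hMT.le hMS.le
          hT₁ hT₂ hS₁ hS₂ x)
    _ = ((MT * MS - mT * mS) / 2) ^ 2 * (‖S x‖ ^ 4 / (MS ^ 2 * mS ^ 2)) := by
      field_simp
      ring

end ContinuousLinearMap

/-- Additive reverse Cauchy–Schwarz inequality for commuting strictly positive bounded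
operators `T, S` on a complex Hilbert space. -/
theorem operator_additive_reverse_cauchy_schwarz
    {H : Type*} [NormedAddCommGroup H] [InnerProductSpace ℂ H] [CompleteSpace H]
    (T S : H →L[ℂ] H)
    (hT : IsSelfAdjoint T) (hS : IsSelfAdjoint S)
    (hT' : ∃ ε : ℝ, 0 < ε ∧ ∀ x : H, ε * ‖x‖ ^ 2 ≤ (inner ℂ (T x) x : ℂ).re)
    (hS' : ∃ ε : ℝ, 0 < ε ∧ ∀ x : H, ε * ‖x‖ ^ 2 ≤ (inner ℂ (S x) x : ℂ).re)
    (hTS : T * S = S * T) (x : H) :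
    ‖T x‖ ^ 2 * ‖S x‖ ^ 2 - ‖(inner ℂ (T x) (S x) : ℂ)‖ ^ 2
      ≤ ((sSup (spectrum ℝ T) * sSup (spectrum ℝ S)
            - sInf (spectrum ℝ T) * sInf (spectrum ℝ S)) / 2) ^ 2
        * min (‖S x‖ ^ 4 / (sSup (spectrum ℝ S) ^ 2 * sInf (spectrum ℝ S) ^ 2))
              (‖T x‖ ^ 4 / (sSup (spectrum ℝ T) ^ 2 * sInf (spectrum ℝ T) ^ 2)) := by
  rcases subsingleton_or_nontrivial H with _ | _
  · simp [Subsingleton.elim x 0]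
  obtain ⟨εT, hεT, hT'⟩ := hT'
  obtain ⟨εS, hεS, hS'⟩ := hS'
  have hmT := hεT.trans_le <| hT.le_sInf_spectrum_of_algebraMap_le <|
    ContinuousLinearMap.algebraMap_le_of_forall_le_re_inner hT hT'
  have hmS := hεS.trans_le <| hS.le_sInf_spectrum_of_algebraMap_le <|
    ContinuousLinearMap.algebraMap_le_of_forall_le_re_inner hS hS'
  have hTS' := ContinuousLinearMap.norm_sq_mul_norm_sq_sub_norm_inner_sq_le hTS hmT hmS
    hT.sInf_spectrum_le_sSup_spectrum hS.sInf_spectrum_le_sSup_spectrum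
    hT.algebraMap_sInf_spectrum_le hT.le_algebraMap_sSup_spectrum
    hS.algebraMap_sInf_spectrum_le hS.le_algebraMap_sSup_spectrum x
  have hST := ContinuousLinearMap.norm_sq_mul_norm_sq_sub_norm_inner_sq_le (Commute.symm hTS) hmS hmT
    hS.sInf_spectrum_le_sSup_spectrum hT.sInf_spectrum_le_sSup_spectrum
    hS.algebraMap_sInf_spectrum_le hS.le_algebraMap_sSup_spectrum
    hT.algebraMap_sInf_spectrum_le hT.le_algebraMap_sSup_spectrum x
  rw [mul_min_of_nonneg _ _ (sq_nonneg _)]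
  refine le_min hTS' ?_
  rw [norm_inner_symm]
  linarith
end

section
/- Let ℋ be a complex Hilbert space and T, S ∈ 𝔅(ℋ) strictly positive bounded operators with TS = ST. Then for all x ∈ ℋ: ‖Tx‖‖Sx‖ ≤ (1/2)·( √(inf σ(T) inf σ(S)/(sup σ(T) sup σ(S))) + √(sup σ(T) sup σ(S)/(inf σ(T) inf σ(S))) ) · |⟨Tx, Sx⟩|. -/
/-!
Let `m₁ ≤ T ≤ M₁` and `m₂ ≤ S ≤ M₂`, the bounds being the extremes of the spectra. Then
`M₂ T - m₁ S` and `M₁ S - m₂ T` are positive and commute, so their product is positive. Testing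
it against `x` gives `m₂M₂‖Tx‖² + m₁M₁‖Sx‖² ≤ (m₁m₂ + M₁M₂) Re⟨Tx, Sx⟩`, and AM-GM on the left
turns this into `2 √(m₁m₂M₁M₂) ‖Tx‖‖Sx‖ ≤ (m₁m₂ + M₁M₂) |⟨Tx, Sx⟩|`.
-/

open RCLike

namespace Real

lemma sqrt_div_add_sqrt_div {m M : ℝ} (hm : 0 < m) (hM : 0 < M) :
    √(m / M) + √(M / m) = (m + M) / √(m * M) := by
  rw [sqrt_div hm.le, sqrt_div hM.le, sqrt_mul hm.le]
  have := sqrt_pos.mpr hm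
  have := sqrt_pos.mpr hM
  field_simp
  rw [sq_sqrt hm.le, sq_sqrt hM.le]

lemma two_mul_sqrt_mul_mul_le {p q : ℝ} (hp : 0 ≤ p) (hq : 0 ≤ q) (u v : ℝ) :
    2 * √(p * q) * (u * v) ≤ p * u ^ 2 + q * v ^ 2 := by
  have := two_mul_le_add_sq (√p * u) (√q * v)
  rw [mul_pow, mul_pow, sq_sqrt hp, sq_sqrt hq] at this
  rw [sqrt_mul hp]
  linarith

lemma mul_le_of_weighted_sq_add_le {p q m M u v c : ℝ} (hp : 0 ≤ p) (hq : 0 ≤ q) (hm : 0 < m)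
    (hM : 0 < M) (hpq : p * q = m * M) (h : p * u ^ 2 + q * v ^ 2 ≤ (m + M) * c) :
    u * v ≤ 1 / 2 * (√(m / M) + √(M / m)) * c := by
  have hAMGM := two_mul_sqrt_mul_mul_le hp hq u v
  rw [hpq] at hAMGM
  have hs : 0 < √(m * M) := sqrt_pos.mpr (mul_pos hm hM)
  rw [sqrt_div_add_sqrt_div hm hM, show 1 / 2 * ((m + M) / √(m * M)) * c
    = (m + M) * c / (2 * √(m * M)) by ring, le_div_iff₀ (by positivity)]
  linarith

end Real

namespace IsSelfAdjoint

variable {A : Type*} [CStarAlgebra A] {a : A}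

lemma sInf_spectrum_le_sSup_spectrum_s7 [Nontrivial A] (ha : IsSelfAdjoint a) :
    sInf (spectrum ℝ a) ≤ sSup (spectrum ℝ a) :=
  have hc := ContinuousFunctionalCalculus.isCompact_spectrum (R := ℝ) a
  csInf_le_csSup (ContinuousFunctionalCalculus.spectrum_nonempty a ha) hc.bddBelow hc.bddAbove

variable [PartialOrder A] [StarOrderedRing A]

lemma algebraMap_sInf_spectrum_le_s7 (ha : IsSelfAdjoint a) :
    algebraMap ℝ A (sInf (spectrum ℝ a)) ≤ a :=
  (algebraMap_le_iff_le_spectrum ha).mpr fun _ hx ↦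
    csInf_le (ContinuousFunctionalCalculus.isCompact_spectrum a).bddBelow hx

lemma le_algebraMap_sSup_spectrum_s7 (ha : IsSelfAdjoint a) :
    a ≤ algebraMap ℝ A (sSup (spectrum ℝ a)) :=
  (le_algebraMap_iff_spectrum_le ha).mpr fun _ hx ↦
    le_csSup (ContinuousFunctionalCalculus.isCompact_spectrum a).bddAbove hx

lemma le_sInf_spectrum [Nontrivial A] (ha : IsSelfAdjoint a) {r : ℝ}
    (h : algebraMap ℝ A r ≤ a) : r ≤ sInf (spectrum ℝ a) :=
  le_csInf (ContinuousFunctionalCalculus.spectrum_nonempty a ha)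
    ((algebraMap_le_iff_le_spectrum ha).mp h)

end IsSelfAdjoint

lemma Commute.smul_mul_self_add_smul_mul_self_le {A : Type*} [CStarAlgebra A] [PartialOrder A]
    [StarOrderedRing A] {a b : A} (hab : Commute a b) {m₁ M₁ m₂ M₂ : ℝ}
    (hm₁ : 0 ≤ m₁) (hM₁ : 0 ≤ M₁) (hm₂ : 0 ≤ m₂) (hM₂ : 0 ≤ M₂)
    (ha₁ : algebraMap ℝ A m₁ ≤ a) (ha₂ : a ≤ algebraMap ℝ A M₁)
    (hb₁ : algebraMap ℝ A m₂ ≤ b) (hb₂ : b ≤ algebraMap ℝ A M₂) :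
    (m₂ * M₂) • (a * a) + (m₁ * M₁) • (b * b) ≤ (m₁ * m₂ + M₁ * M₂) • (a * b) := by
  have hP : 0 ≤ M₂ • a - m₁ • b := by
    have : M₂ • a - m₁ • b = M₂ • (a - algebraMap ℝ A m₁) + m₁ • (algebraMap ℝ A M₂ - b) := by
      simp only [Algebra.algebraMap_eq_smul_one]
      module
    rw [this]
    exact add_nonneg (smul_nonneg hM₂ (sub_nonneg.mpr ha₁)) (smul_nonneg hm₁ (sub_nonneg.mpr hb₂))
  have hQ : 0 ≤ M₁ • b - m₂ • a := by
    have : M₁ • b - m₂ • a = M₁ • (b - algebraMap ℝ A m₂) + m₂ • (algebraMap ℝ A M₁ - a) := by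
      simp only [Algebra.algebraMap_eq_smul_one]
      module
    rw [this]
    exact add_nonneg (smul_nonneg hM₁ (sub_nonneg.mpr hb₁)) (smul_nonneg hm₂ (sub_nonneg.mpr ha₂))
  have hPQ : Commute (M₂ • a - m₁ • b) (M₁ • b - m₂ • a) := by
    apply Commute.sub_left <;> apply Commute.sub_right <;> apply Commute.smul_left <;>
      apply Commute.smul_right
    exacts [hab, .refl a, .refl b, hab.symm]
  have := hPQ.mul_nonneg hP hQ
  rw [← sub_nonneg]
  convert this using 1
  simp only [sub_mul, mul_sub, smul_mul_assoc, mul_smul_comm, hab.eq]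
  module

section HilbertSpace

variable {H : Type*} [NormedAddCommGroup H] [InnerProductSpace ℂ H]

lemma re_inner_real_smul_left (r : ℝ) (x y : H) :
    re (inner ℂ (r • x) y) = r * re (inner ℂ x y) := by
  rw [real_smul_eq_coe_smul (K := ℂ), inner_smul_real_left, smul_re]

namespace ContinuousLinearMap

lemma re_inner_algebraMap_apply_self (r : ℝ) (x : H) :
    re (inner ℂ (algebraMap ℝ (H →L[ℂ] H) r x) x) = r * ‖x‖ ^ 2 := by
  rw [Algebra.algebraMap_eq_smul_one, smul_apply, one_apply_eq_self, re_inner_real_smul_left,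
    inner_self_eq_norm_sq]

lemma re_inner_le_re_inner_of_le {T S : H →L[ℂ] H} (h : T ≤ S) (x : H) :
    re (inner ℂ (T x) x) ≤ re (inner ℂ (S x) x) := by
  have := ((le_def T S).mp h).re_inner_nonneg_left x
  rwa [sub_apply, inner_sub_left, map_sub, sub_nonneg] at this

lemma algebraMap_le_of_forall_mul_norm_sq_le [CompleteSpace H] {T : H →L[ℂ] H}
    (hT : IsSelfAdjoint T) {r : ℝ} (h : ∀ x, r * ‖x‖ ^ 2 ≤ re (inner ℂ (T x) x)) :
    algebraMap ℝ (H →L[ℂ] H) r ≤ T := by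
  refine (le_def _ _).mpr (isPositive_def'.mpr ⟨hT.sub (.algebraMap _ (.all r)), fun x ↦ ?_⟩)
  rw [reApplyInnerSelf_apply, sub_apply, inner_sub_left, map_sub, re_inner_algebraMap_apply_self,
    sub_nonneg]
  exact h x

end ContinuousLinearMap

namespace IsSelfAdjoint

variable [CompleteSpace H] {T : H →L[ℂ] H}

lemma re_inner_mul_apply_self (hT : IsSelfAdjoint T) (S : H →L[ℂ] H) (x : H) :
    re (inner ℂ ((T * S) x) x) = re (inner ℂ (T x) (S x)) := by
  rw [mul_apply_eq_comp, ← ContinuousLinearMap.coe_coe, hT.isSymmetric,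
    ContinuousLinearMap.coe_coe, inner_re_symm]

lemma re_inner_mul_self_apply_self (hT : IsSelfAdjoint T) (x : H) :
    re (inner ℂ ((T * T) x) x) = ‖T x‖ ^ 2 := by
  rw [hT.re_inner_mul_apply_self, inner_self_eq_norm_sq]

lemma weighted_norm_sq_add_le_re_inner {S : H →L[ℂ] H} (hT : IsSelfAdjoint T)
    (hS : IsSelfAdjoint S) (hTS : Commute T S) {m₁ M₁ m₂ M₂ : ℝ}
    (hm₁ : 0 ≤ m₁) (hM₁ : 0 ≤ M₁) (hm₂ : 0 ≤ m₂) (hM₂ : 0 ≤ M₂)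
    (hT₁ : algebraMap ℝ _ m₁ ≤ T) (hT₂ : T ≤ algebraMap ℝ _ M₁)
    (hS₁ : algebraMap ℝ _ m₂ ≤ S) (hS₂ : S ≤ algebraMap ℝ _ M₂) (x : H) :
    m₂ * M₂ * ‖T x‖ ^ 2 + m₁ * M₁ * ‖S x‖ ^ 2
      ≤ (m₁ * m₂ + M₁ * M₂) * re (inner ℂ (T x) (S x)) := by
  have := ContinuousLinearMap.re_inner_le_re_inner_of_le
    (hTS.smul_mul_self_add_smul_mul_self_le hm₁ hM₁ hm₂ hM₂ hT₁ hT₂ hS₁ hS₂) x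
  simpa only [add_apply, smul_apply, inner_add_left, map_add, re_inner_real_smul_left,
    ← hT.re_inner_mul_self_apply_self, ← hS.re_inner_mul_self_apply_self,
    ← hT.re_inner_mul_apply_self] using this

end IsSelfAdjoint

end HilbertSpace

/-- Multiplicative reverse Cauchy–Schwarz inequality for commuting strictly positive bounded
operators `T, S` on a complex Hilbert space. -/
theorem operator_multiplicative_reverse_cauchy_schwarz
    {H : Type*} [NormedAddCommGroup H] [InnerProductSpace ℂ H] [CompleteSpace H]
    (T S : H →L[ℂ] H)
    (hT : IsSelfAdjoint T) (hS : IsSelfAdjoint S)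
    (hT' : ∃ ε : ℝ, 0 < ε ∧ ∀ x : H, ε * ‖x‖ ^ 2 ≤ (inner ℂ (T x) x : ℂ).re)
    (hS' : ∃ ε : ℝ, 0 < ε ∧ ∀ x : H, ε * ‖x‖ ^ 2 ≤ (inner ℂ (S x) x : ℂ).re)
    (hTS : T * S = S * T) (x : H) :
    ‖T x‖ * ‖S x‖
      ≤ 1 / 2 * (Real.sqrt (sInf (spectrum ℝ T) * sInf (spectrum ℝ S)
                    / (sSup (spectrum ℝ T) * sSup (spectrum ℝ S)))
          + Real.sqrt (sSup (spectrum ℝ T) * sSup (spectrum ℝ S)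
                    / (sInf (spectrum ℝ T) * sInf (spectrum ℝ S))))
        * ‖(inner ℂ (T x) (S x) : ℂ)‖ := by
  rcases subsingleton_or_nontrivial H with _ | _
  · simp [Subsingleton.elim x 0]
  obtain ⟨εT, hεT, hTε⟩ := hT'
  obtain ⟨εS, hεS, hSε⟩ := hS'
  have hmT : 0 < sInf (spectrum ℝ T) := hεT.trans_le <|
    hT.le_sInf_spectrum (ContinuousLinearMap.algebraMap_le_of_forall_mul_norm_sq_le hT hTε)
  have hmS : 0 < sInf (spectrum ℝ S) := hεS.trans_le <|
    hS.le_sInf_spectrum (ContinuousLinearMap.algebraMap_le_of_forall_mul_norm_sq_le hS hSε)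
  have hMT := hmT.trans_le hT.sInf_spectrum_le_sSup_spectrum_s7
  have hMS := hmS.trans_le hS.sInf_spectrum_le_sSup_spectrum_s7
  have key := hT.weighted_norm_sq_add_le_re_inner hS hTS hmT.le hMT.le hmS.le hMS.le
    hT.algebraMap_sInf_spectrum_le_s7 hT.le_algebraMap_sSup_spectrum_s7
    hS.algebraMap_sInf_spectrum_le_s7 hS.le_algebraMap_sSup_spectrum_s7 x
  refine Real.mul_le_of_weighted_sq_add_le (mul_pos hmS hMS).le (mul_pos hmT hMT).le
    (mul_pos hmT hmS) (mul_pos hMT hMS) (by ring) (key.trans ?_)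
  exact mul_le_mul_of_nonneg_left (re_le_norm _) (add_pos (mul_pos hmT hmS) (mul_pos hMT hMS)).le
end

section
/- Let (X, Σ, μ) be a probability space and let f, g be essentially bounded measurable functions on X with 0 < a ≤ f ≤ A and 0 < b ≤ g ≤ B (almost everywhere) for constants a, A, b, B. Then ∫_X f² dμ · ∫_X g² dμ − (∫_X fg dμ)² ≤ ((AB − ab)²/4) · min{ (1/(B²b²))(∫_X g² dμ)², (1/(A²a²))(∫_X f² dμ)² }. -/
/-!
Pointwise, `(B f - a g) (A g - b f) ≥ 0`, i.e. `b B f² + a A g² ≤ (A B + a b) f g`; integrating gives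
`b B ∫f² + a A ∫g² ≤ (A B + a b) ∫fg`. Eliminating `∫f²` and completing the square in `∫fg` bounds
`∫f² ∫g² - (∫fg)²` by `(A B - a b)² / (4 B² b²) (∫g²)²`, using `(A B + a b)² - 4 a b A B = (A B - a b)²`;
the other bound is symmetric.
-/

open MeasureTheory

lemma mul_sub_sq_le_of_mul_add_mul_le {c d e S T P : ℝ} (hc : 0 < c) (hT : 0 ≤ T)
    (h : c * S + d * T ≤ e * P) :
    S * T - P ^ 2 ≤ (e ^ 2 - 4 * c * d) / (4 * c ^ 2) * T ^ 2 := by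
  have hcS : c * S * T ≤ (e * P - d * T) * T := by nlinarith
  rw [div_mul_eq_mul_div, le_div_iff₀ (by positivity)]
  nlinarith [sq_nonneg (e * T - 2 * c * P)]

lemma mul_sq_add_mul_sq_le_mul_mul {a A b B x y : ℝ} (ha : 0 ≤ a) (hb : 0 ≤ b)
    (hx : x ∈ Set.Icc a A) (hy : y ∈ Set.Icc b B) :
    b * B * x ^ 2 + a * A * y ^ 2 ≤ (A * B + a * b) * (x * y) := by
  obtain ⟨hax, hxA⟩ := hx
  obtain ⟨hby, hyB⟩ := hy
  have hBx : a * y ≤ B * x := by nlinarith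
  have hAy : b * x ≤ A * y := by nlinarith
  nlinarith [mul_nonneg (sub_nonneg.2 hBx) (sub_nonneg.2 hAy)]

section

variable {X : Type*} [MeasurableSpace X] {μ : Measure X} [IsFiniteMeasure μ] {f g : X → ℝ}
  {a A b B : ℝ}

lemma integral_mul_sq_add_mul_sq_le (hf : AEMeasurable f μ) (hg : AEMeasurable g μ)
    (ha : 0 ≤ a) (hb : 0 ≤ b) (hfA : ∀ᵐ x ∂μ, f x ∈ Set.Icc a A)
    (hgB : ∀ᵐ x ∂μ, g x ∈ Set.Icc b B) :
    b * B * ∫ x, f x ^ 2 ∂μ + a * A * ∫ x, g x ^ 2 ∂μ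
      ≤ (A * B + a * b) * ∫ x, f x * g x ∂μ := by
  have hf2 : Integrable (fun x ↦ f x ^ 2) μ := by
    refine .of_mem_Icc (a ^ 2) (A ^ 2) (hf.pow_const 2) ?_
    filter_upwards [hfA] with x ⟨hax, hxA⟩
    exact ⟨by nlinarith, by nlinarith⟩
  have hg2 : Integrable (fun x ↦ g x ^ 2) μ := by
    refine .of_mem_Icc (b ^ 2) (B ^ 2) (hg.pow_const 2) ?_
    filter_upwards [hgB] with x ⟨hbx, hxB⟩
    exact ⟨by nlinarith, by nlinarith⟩
  have hfg : Integrable (fun x ↦ f x * g x) μ := by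
    refine .of_mem_Icc (a * b) (A * B) (hf.mul hg) ?_
    filter_upwards [hfA, hgB] with x ⟨hax, hxA⟩ ⟨hbx, hxB⟩
    exact ⟨by nlinarith, by nlinarith⟩
  rw [← integral_const_mul, ← integral_const_mul, ← integral_add (hf2.const_mul _)
    (hg2.const_mul _), ← integral_const_mul]
  refine integral_mono_ae ((hf2.const_mul _).add (hg2.const_mul _)) (hfg.const_mul _) ?_
  filter_upwards [hfA, hgB] with x hfx hgx
  exact mul_sq_add_mul_sq_le_mul_mul ha hb hfx hgx

end

/-- Additive reverse Cauchy–Schwarz (integral) inequality on a probability space. -/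
theorem integral_additive_reverse_cauchy_schwarz
    {X : Type*} [MeasurableSpace X] (μ : Measure X) [IsProbabilityMeasure μ]
    (f g : X → ℝ) (hf : Measurable f) (hg : Measurable g)
    (a A b B : ℝ) (ha : 0 < a) (hb : 0 < b)
    (hfA : ∀ᵐ x ∂μ, a ≤ f x ∧ f x ≤ A)
    (hgB : ∀ᵐ x ∂μ, b ≤ g x ∧ g x ≤ B) :
    (∫ x, (f x) ^ 2 ∂μ) * (∫ x, (g x) ^ 2 ∂μ) - (∫ x, f x * g x ∂μ) ^ 2
      ≤ (A * B - a * b) ^ 2 / 4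
        * min (1 / (B ^ 2 * b ^ 2) * (∫ x, (g x) ^ 2 ∂μ) ^ 2)
              (1 / (A ^ 2 * a ^ 2) * (∫ x, (f x) ^ 2 ∂μ) ^ 2) := by
  obtain ⟨x₀, ⟨hax₀, hx₀A⟩, ⟨hbx₀, hx₀B⟩⟩ := (hfA.and hgB).exists
  have hA : 0 < A := by linarith
  have hB : 0 < B := by linarith
  have hintegral := integral_mul_sq_add_mul_sq_le hf.aemeasurable hg.aemeasurable ha.le hb.le hfA hgB
  have hS : 0 ≤ ∫ x, f x ^ 2 ∂μ := integral_nonneg fun x ↦ sq_nonneg (f x)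
  have hT : 0 ≤ ∫ x, g x ^ 2 ∂μ := integral_nonneg fun x ↦ sq_nonneg (g x)
  rw [mul_min_of_nonneg _ _ (by positivity)]
  refine le_min ?_ ?_
  · linear_combination mul_sub_sq_le_of_mul_add_mul_le (by positivity) hT hintegral
  · linear_combination mul_sub_sq_le_of_mul_add_mul_le (by positivity) hS
      ((add_comm _ _).trans_le hintegral)
end

section
/- Let a₁,…,aₙ and b₁,…,bₙ be positive real numbers with 0 < a ≤ aᵢ ≤ A < ∞ and 0 < b ≤ bᵢ ≤ B < ∞ for all 1 ≤ i ≤ n. Then (∑_{i=1}^n aᵢ²)(∑_{i=1}^n bᵢ²) − (∑_{i=1}^n aᵢbᵢ)² ≤ ((AB − ab)²/4) · min{ (1/(A²a²))(∑_{i=1}^n aᵢ²)², (1/(B²b²))(∑_{i=1}^n bᵢ²)², (1/(abAB))(∑_{i=1}^n aᵢbᵢ)² }. -/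
/-!
Multiplying out `(B aᵢ - a bᵢ)(A bᵢ - b aᵢ) ≥ 0` and summing gives the Diaz–Metcalf inequality
`P x + Q y ≤ R z` for `x = ∑ aᵢ²`, `y = ∑ bᵢ²`, `z = ∑ aᵢbᵢ`, where `P = bB`, `Q = aA`, `R = AB + ab`,
so that `R² - 4PQ = (AB - ab)²`. Each of the three bounds then comes from this linear constraint:
eliminating `y` and completing the square in `z` bounds `xy - z²` by a multiple of `x²`
(symmetrically of `y²`), while AM–GM `4PQ xy ≤ (P x + Q y)² ≤ (R z)²` bounds it by a multiple of `z²`.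
-/

open Finset

section OrderedRing

variable {α : Type*} [CommRing α] [LinearOrder α] [IsStrictOrderedRing α]

theorem mul_sq_add_mul_sq_le_of_mem_Icc {a A b B x y : α} (ha : 0 ≤ a) (hb : 0 ≤ b)
    (hx : x ∈ Set.Icc a A) (hy : y ∈ Set.Icc b B) :
    b * B * x ^ 2 + a * A * y ^ 2 ≤ (A * B + a * b) * (x * y) := by
  obtain ⟨hax, hxA⟩ := hx
  obtain ⟨hby, hyB⟩ := hy
  have h₁ : 0 ≤ B * x - a * y := by nlinarith
  have h₂ : 0 ≤ A * y - b * x := by nlinarith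
  nlinarith [mul_nonneg h₁ h₂]

theorem Finset.diaz_metcalf {ι : Type*} (s : Finset ι) (f g : ι → α) {a A b B : α}
    (ha : 0 ≤ a) (hb : 0 ≤ b) (hf : ∀ i ∈ s, f i ∈ Set.Icc a A) (hg : ∀ i ∈ s, g i ∈ Set.Icc b B) :
    b * B * ∑ i ∈ s, f i ^ 2 + a * A * ∑ i ∈ s, g i ^ 2
      ≤ (A * B + a * b) * ∑ i ∈ s, f i * g i := by
  rw [mul_sum, mul_sum, mul_sum, ← sum_add_distrib]
  exact sum_le_sum fun i hi => mul_sq_add_mul_sq_le_of_mem_Icc ha hb (hf i hi) (hg i hi)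

end OrderedRing

section OrderedField

variable {α : Type*} [Field α] [LinearOrder α] [IsStrictOrderedRing α] {P Q R x y z : α}

theorem mul_sub_sq_le_of_add_le_left (hQ : 0 < Q) (hx : 0 ≤ x) (h : P * x + Q * y ≤ R * z) :
    x * y - z ^ 2 ≤ (R ^ 2 - 4 * P * Q) / 4 * (x ^ 2 / Q ^ 2) := by
  rw [div_mul_div_comm, le_div_iff₀ (by positivity)]
  nlinarith [mul_le_mul_of_nonneg_left h (by positivity : 0 ≤ 4 * Q * x),
    sq_nonneg (2 * Q * z - R * x)]

theorem mul_sub_sq_le_of_add_le_right (hP : 0 < P) (hy : 0 ≤ y) (h : P * x + Q * y ≤ R * z) :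
    x * y - z ^ 2 ≤ (R ^ 2 - 4 * P * Q) / 4 * (y ^ 2 / P ^ 2) := by
  have := mul_sub_sq_le_of_add_le_left (P := Q) (x := y) (y := x) (z := z) (R := R) hP hy
    (by linarith)
  rwa [mul_comm y, mul_right_comm 4 Q] at this

theorem mul_sub_sq_le_of_add_le_sq (hPQ : 0 < P * Q) (h₀ : 0 ≤ P * x + Q * y)
    (h : P * x + Q * y ≤ R * z) :
    x * y - z ^ 2 ≤ (R ^ 2 - 4 * P * Q) / 4 * (z ^ 2 / (P * Q)) := by
  rw [div_mul_div_comm, le_div_iff₀ (by positivity)]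
  nlinarith [pow_le_pow_left₀ h₀ h 2, sq_nonneg (P * x - Q * y)]

theorem mul_sub_sq_le_mul_min_of_add_le (hP : 0 < P) (hQ : 0 < Q) (hx : 0 ≤ x) (hy : 0 ≤ y)
    (h : P * x + Q * y ≤ R * z) :
    x * y - z ^ 2
      ≤ (R ^ 2 - 4 * P * Q) / 4 * min (x ^ 2 / Q ^ 2) (min (y ^ 2 / P ^ 2) (z ^ 2 / (P * Q))) := by
  -- `min` picks one of its arguments, so no sign condition on `R ^ 2 - 4 * P * Q` is needed.
  rcases min_choice (x ^ 2 / Q ^ 2) (min (y ^ 2 / P ^ 2) (z ^ 2 / (P * Q))) with hm | hm <;>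
    rw [hm]
  · exact mul_sub_sq_le_of_add_le_left hQ hx h
  rcases min_choice (y ^ 2 / P ^ 2) (z ^ 2 / (P * Q)) with hm | hm <;> rw [hm]
  · exact mul_sub_sq_le_of_add_le_right hP hy h
  · exact mul_sub_sq_le_of_add_le_sq (by positivity) (by positivity) h

end OrderedField

/-- Improved additive Pólya–Szegő inequality with a `min` of three bounds. -/
theorem improved_polya_szego
    (n : ℕ) (hn : 0 < n) (a A b B : ℝ) (ha : 0 < a) (hb : 0 < b)
    (av bv : Fin n → ℝ)
    (haA : ∀ i, a ≤ av i ∧ av i ≤ A) (hbB : ∀ i, b ≤ bv i ∧ bv i ≤ B) :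
    (∑ i, (av i) ^ 2) * (∑ i, (bv i) ^ 2) - (∑ i, av i * bv i) ^ 2
      ≤ (A * B - a * b) ^ 2 / 4
        * min (1 / (A ^ 2 * a ^ 2) * (∑ i, (av i) ^ 2) ^ 2)
            (min (1 / (B ^ 2 * b ^ 2) * (∑ i, (bv i) ^ 2) ^ 2)
                 (1 / (a * b * A * B) * (∑ i, av i * bv i) ^ 2)) := by
  have hA : 0 < A := ha.trans_le ((haA ⟨0, hn⟩).1.trans (haA ⟨0, hn⟩).2)
  have hB : 0 < B := hb.trans_le ((hbB ⟨0, hn⟩).1.trans (hbB ⟨0, hn⟩).2)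
  have key := mul_sub_sq_le_mul_min_of_add_le (by positivity : 0 < b * B)
    (by positivity : 0 < a * A) (sum_nonneg fun i _ => sq_nonneg (av i))
    (sum_nonneg fun i _ => sq_nonneg (bv i))
    (diaz_metcalf univ av bv ha.le hb.le (fun i _ => haA i) fun i _ => hbB i)
  rw [show (A * B - a * b) ^ 2 = (A * B + a * b) ^ 2 - 4 * (b * B) * (a * A) by ring,
    show A ^ 2 * a ^ 2 = (a * A) ^ 2 by ring, show B ^ 2 * b ^ 2 = (b * B) ^ 2 by ring,
    show a * b * A * B = b * B * (a * A) by ring]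
  simpa only [one_div_mul_eq_div] using key
end
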